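/- arXiv:2502.09907 — 2 statements merged into one kernel-verified Lean document; each statement's English description precedes it below -/
import Mathlib

section
/- Let F be a probability measure on [0,1] with a density f : [0,1] → [0,1] such that t ↦ t·f(t) is non-decreasing. For α in [0,1], let s_α be the uniform-bid-shading strategy that bids α·v deterministically for every value v. Then sup over all probability measures H on [0,1] of Reg_F(s_α, H) = max{ α · E_{v∼F}[v], E_{v∼F}[(v − α·F⁻(1))⁺] }. -/
open MeasureTheory ProbabilityTheory Set

noncomputable section

namespace FPA

/-- The unit interval `[0,1] ⊆ ℝ`. -/
def Iu : Set ℝ := Set.Icc 0 1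

/-- `μ` is a probability measure on `[0,1]`. -/
def IsProbOn (μ : Measure ℝ) : Prop := IsProbabilityMeasure μ ∧ μ Iu = 1

/-- A bidding strategy: a Markov kernel from `[0,1]` to `[0,1]`. -/
def IsStrategy (s : Kernel ℝ ℝ) : Prop := IsMarkovKernel s ∧ ∀ v : ℝ, s v Iu = 1

/-- The buyer's utility `u(b,h;v) = (v−b)·1{b ≥ h}`. -/
def util (b h v : ℝ) : ℝ := (v - b) * (if h ≤ b then 1 else 0)

/-- Expected utility `U_F(s,H)`. -/
def eUtil (F : Measure ℝ) (s : Kernel ℝ ℝ) (H : Measure ℝ) : ℝ :=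
  ∫ v, ∫ h, ∫ b, util b h v ∂(s v) ∂H ∂F

/-- Regret `Reg_F(s,H) = sup_{s'∈S} U_F(s',H) − U_F(s,H)`. -/
def regret (F : Measure ℝ) (s : Kernel ℝ ℝ) (H : Measure ℝ) : ℝ :=
  (⨆ s' : {k : Kernel ℝ ℝ // IsStrategy k}, eUtil F s'.1 H) - eUtil F s H

/-- Induced bid distribution `P_{s,F}`. -/
def bidDist (F : Measure ℝ) (s : Kernel ℝ ℝ) : Measure ℝ := F.bind (fun v => s v)

/-- CDF of a measure on `[0,1]`: `F(x) = F([0,x])`. -/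
def cdf01 (F : Measure ℝ) (x : ℝ) : ℝ := (F (Set.Iic x)).toReal

/-- Generalized inverse `F⁻(t) = inf {x ∈ [0,1] : F(x) ≥ t}`. -/
def qinv (F : Measure ℝ) (t : ℝ) : ℝ := sInf {x | x ∈ Iu ∧ t ≤ cdf01 F x}

/-- Full-information benchmark against a deterministic highest competing bid `h`. -/
def bench (F : Measure ℝ) (h : ℝ) : ℝ := ∫ v, (v - h) * (if h ≤ v then 1 else 0) ∂F

/-- Full-information regret `R_F(s,H)`. -/
def fregret (F : Measure ℝ) (s : Kernel ℝ ℝ) (H : Measure ℝ) : ℝ :=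
  (∫ h, bench F h ∂H) - eUtil F s H

/-- Absolute continuity of a function on `[0,1]` (FTC characterization). -/
def AbsContOn01 (f : ℝ → ℝ) : Prop :=
  ∃ g : ℝ → ℝ, IntervalIntegrable g volume 0 1 ∧
    ∀ x ∈ Iu, f x = f 0 + ∫ t in (0:ℝ)..x, g t

/-- The set of quantiles corresponding to value `v`: `Y(v) = {y ∈ [0,1] : F⁻(y) = v}`. -/
def Yset (F : Measure ℝ) (v : ℝ) : Set ℝ := {y | y ∈ Iu ∧ qinv F y = v}

/-- Uniform distribution on a set `A ⊆ ℝ`. -/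
def unifOn (A : Set ℝ) : Measure ℝ := (volume A)⁻¹ • volume.restrict A

/-- `s` is the bidding strategy corresponding to the quantile-based bidding strategy `Q`:
it bids `Q(F(v))` when `F({v}) = 0`, and the pushforward under `Q` of the uniform
distribution on `Y(v)` when `F({v}) > 0`. -/
def IsQuantileStrategy (F : Measure ℝ) (Q : ℝ → ℝ) (s : Kernel ℝ ℝ) : Prop :=
  IsStrategy s ∧ ∀ v ∈ Iu,
    s v = if F {v} = 0 then Measure.dirac (Q (cdf01 F v)) else (unifOn (Yset F v)).map Q

/-- The candidate worst-case highest-competing-bid CDF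
`H*(x) = exp(−∫_{(Q*)⁻¹(x)}^1 dt/(1−F(Q*(t))))`. -/
def Hstar (F : Measure ℝ) (Q : ℝ → ℝ) (x : ℝ) : ℝ :=
  Real.exp (-(∫ t in (Function.invFunOn Q Iu x)..(1:ℝ), 1 / (1 - cdf01 F (Q t))))


/-! The regret against `H` is at most the full-information regret, which is the `H`-average of
`φ(h) = E[(v - h)⁺] - E[u(αv, h; v)]`, the regret against a deterministic competing bid `h`.
For `h ≥ α`, `φ(h) ≤ E[(v - h)⁺] ≤ E[(v - α)⁺]`. On `[0, α]`, `φ` is convex: `E[(v - h)⁺]` is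
convex in `h`, and the density gives `E[u(αv, h; v)] = (1 - α) ∫_{h/α}^1 t f(t) dt`, whose
negative is convex because `t f(t)` is non-decreasing. Hence
`φ(h) ≤ max (φ 0) (φ α) ≤ max (α E[v]) (E[(v - α)⁺])`, and `E[(v - α)⁺] ≤ E[(v - α F⁻(1))⁺]`
as `F⁻(1) ≤ 1`. Conversely, `H = δ_0` has regret `α E[v]`, and against `H = δ_c` with `c`
slightly above `α F⁻(1)` the shaded bid never wins, so the regret is `E[(v - c)⁺]`. -/

theorem integral_le_integral_of_le_of_nonneg {X : Type*} [MeasurableSpace X] {μ : Measure X}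
    {f g : X → ℝ} (hg : Integrable g μ) (hg0 : 0 ≤ᵐ[μ] g) (hfg : f ≤ᵐ[μ] g) :
    ∫ x, f x ∂μ ≤ ∫ x, g x ∂μ := by
  by_cases hf : Integrable f μ
  · exact integral_mono_ae hf hg hfg
  · rw [integral_undef hf]
    exact integral_nonneg_of_ae hg0

theorem convexOn_integral {X E : Type*} [MeasurableSpace X] [AddCommGroup E] [Module ℝ E]
    {μ : Measure X} {s : Set E} {φ : E → X → ℝ} (hs : Convex ℝ s)
    (hφ : ∀ x, ConvexOn ℝ s (φ · x)) (hint : ∀ a ∈ s, Integrable (φ a) μ) :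
    ConvexOn ℝ s (fun a => ∫ x, φ a x ∂μ) := by
  refine ⟨hs, fun a ha b hb p q hp hq hpq => ?_⟩
  simp only [smul_eq_mul]
  rw [← integral_const_mul, ← integral_const_mul,
    ← integral_add ((hint a ha).const_mul p) ((hint b hb).const_mul q)]
  exact integral_mono (hint _ (hs ha hb hp hq hpq))
    (((hint a ha).const_mul p).add ((hint b hb).const_mul q))
    fun x => (hφ x).2 ha hb hp hq hpq

theorem _root_.MonotoneOn.convexOn_intervalIntegral {ρ : ℝ → ℝ} {a b : ℝ}
    (hρ : MonotoneOn ρ (Icc a b)) : ConvexOn ℝ (Icc a b) (fun x => ∫ t in a..x, ρ t) := by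
  have hint : ∀ x ∈ Icc a b, ∀ y ∈ Icc a b, IntervalIntegrable ρ volume x y := fun x hx y hy =>
    (hρ.mono (uIcc_subset_Icc hx hy)).intervalIntegrable
  refine convexOn_of_slope_mono_adjacent (convex_Icc a b) fun {x y z} hx hz hxy hyz => ?_
  have hy : y ∈ Icc a b := ⟨hx.1.trans hxy.le, hyz.le.trans hz.2⟩
  have ha : a ∈ Icc a b := ⟨le_rfl, hx.1.trans hx.2⟩
  rw [intervalIntegral.integral_interval_sub_left (hint a ha y hy) (hint a ha x hx),
    intervalIntegral.integral_interval_sub_left (hint a ha z hz) (hint a ha y hy),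
    div_le_iff₀ (sub_pos.2 hxy), div_mul_eq_mul_div, le_div_iff₀ (sub_pos.2 hyz)]
  have hleft : ∫ t in x..y, ρ t ≤ (y - x) * ρ y := by
    simpa [mul_comm] using intervalIntegral.integral_mono_on hxy.le (hint x hx y hy)
      intervalIntegrable_const fun t ht => hρ ⟨hx.1.trans ht.1, ht.2.trans hy.2⟩ hy ht.2
  have hright : (z - y) * ρ y ≤ ∫ t in y..z, ρ t := by
    simpa [mul_comm] using intervalIntegral.integral_mono_on hyz.le intervalIntegrable_const
      (hint y hy z hz) fun t ht => hρ hy ⟨hy.1.trans ht.1, ht.2.trans hz.2⟩ ht.1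
  nlinarith [sub_pos.2 hxy, sub_pos.2 hyz]

theorem measurableSet_Iu : MeasurableSet Iu := measurableSet_Icc

theorem zero_mem_Iu : (0 : ℝ) ∈ Iu := ⟨le_rfl, zero_le_one⟩

theorem one_mem_Iu : (1 : ℝ) ∈ Iu := ⟨zero_le_one, le_rfl⟩

theorem isProbOn_dirac {c : ℝ} (hc : c ∈ Iu) : IsProbOn (Measure.dirac c) :=
  ⟨inferInstance, by simp [hc]⟩

section ProbOn

variable {μ ν : Measure ℝ} (hμ : IsProbOn μ)
include hμ

theorem IsProbOn.ae_mem : ∀ᵐ x ∂μ, x ∈ Iu := by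
  have := hμ.1
  exact ae_iff.2 ((prob_compl_eq_zero_iff measurableSet_Iu).2 hμ.2)

theorem IsProbOn.integrable_prod_of_bound (hν : IsProbOn ν) {φ : ℝ × ℝ → ℝ}
    (hφ : AEStronglyMeasurable φ (μ.prod ν)) (C : ℝ)
    (hC : ∀ x ∈ Iu, ∀ y ∈ Iu, ‖φ (x, y)‖ ≤ C) : Integrable φ (μ.prod ν) := by
  have := hμ.1
  have := hν.1
  refine .of_bound hφ C ?_
  filter_upwards [Measure.quasiMeasurePreserving_fst.ae hμ.ae_mem,
    Measure.quasiMeasurePreserving_snd.ae hν.ae_mem] with p hx hy using hC _ hx _ hy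

theorem IsProbOn.integrable_max_sub_prod (hν : IsProbOn ν) :
    Integrable (fun p : ℝ × ℝ => max (p.1 - p.2) 0) (μ.prod ν) :=
  hμ.integrable_prod_of_bound hν (by fun_prop) 1 fun x hx y hy => by
    rw [Real.norm_eq_abs, abs_of_nonneg (le_max_right _ _)]
    exact max_le (by linarith [hx.2, hy.1]) zero_le_one

theorem IsProbOn.integrable_id : Integrable (fun x => x) μ := by
  have := hμ.1
  refine .of_bound measurable_id.aestronglyMeasurable 1 (hμ.ae_mem.mono fun x hx => ?_)
  rw [Real.norm_eq_abs, abs_le]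
  constructor <;> linarith [hx.1, hx.2]

theorem IsProbOn.integrable_max_sub (a : ℝ) : Integrable (fun x => max (x - a) 0) μ := by
  have := hμ.1
  exact (hμ.integrable_id.sub (integrable_const a)).pos_part

theorem IsProbOn.antitone_integral_max_sub : Antitone fun a => ∫ x, max (x - a) 0 ∂μ :=
  fun a b hab => integral_mono (hμ.integrable_max_sub b) (hμ.integrable_max_sub a)
    fun x => max_le_max (by linarith) le_rfl

theorem IsProbOn.integral_max_sub_le_add {a b : ℝ} (hab : a ≤ b) :
    ∫ x, max (x - a) 0 ∂μ ≤ ∫ x, max (x - b) 0 ∂μ + (b - a) := by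
  have := hμ.1
  calc ∫ x, max (x - a) 0 ∂μ ≤ ∫ x, (max (x - b) 0 + (b - a)) ∂μ :=
        integral_mono (hμ.integrable_max_sub a)
          ((hμ.integrable_max_sub b).add (integrable_const _)) fun x => by
            simp only [max_le_iff]
            constructor <;> linarith [le_max_left (x - b) 0, le_max_right (x - b) 0]
    _ = ∫ x, max (x - b) 0 ∂μ + (b - a) := by
        rw [integral_add (hμ.integrable_max_sub b) (integrable_const _)]
        simp

theorem IsProbOn.convexOn_integral_max_sub : ConvexOn ℝ univ fun a => ∫ x, max (x - a) 0 ∂μ :=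
  convexOn_integral convex_univ
    (fun x => ((convexOn_const x convex_univ).sub (concaveOn_id convex_univ)).sup
      (convexOn_const 0 convex_univ))
    fun a _ => hμ.integrable_max_sub a

theorem IsProbOn.cdf01_one : cdf01 μ 1 = 1 := by
  have := hμ.1
  rw [cdf01, le_antisymm prob_le_one (hμ.2 ▸ measure_mono fun x hx => hx.2), ENNReal.toReal_one]

theorem IsProbOn.qinv_one_le_one : qinv μ 1 ≤ 1 :=
  csInf_le ⟨0, fun _ hx => hx.1.1⟩ ⟨one_mem_Iu, hμ.cdf01_one.ge⟩

theorem IsProbOn.exists_ae_le_of_qinv_one_lt {x : ℝ} (hx : qinv μ 1 < x) :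
    ∃ y ∈ Iu, qinv μ 1 ≤ y ∧ y < x ∧ ∀ᵐ v ∂μ, v ≤ y := by
  have := hμ.1
  obtain ⟨y, ⟨hyIu, hy⟩, hyx⟩ := exists_lt_of_csInf_lt (s := {x | x ∈ Iu ∧ 1 ≤ cdf01 μ x})
    ⟨1, one_mem_Iu, hμ.cdf01_one.ge⟩ hx
  refine ⟨y, hyIu, csInf_le ⟨0, fun _ hz => hz.1.1⟩ ⟨hyIu, hy⟩, hyx, ?_⟩
  refine (ae_mem_iff_measure_eq measurableSet_Iic.nullMeasurableSet).2 ?_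
  rw [measure_univ]
  refine le_antisymm prob_le_one ?_
  rwa [← ENNReal.ofReal_one, ENNReal.ofReal_le_iff_le_toReal (measure_ne_top _ _)]

end ProbOn

theorem util_le_max (b h v : ℝ) : util b h v ≤ max (v - h) 0 := by
  unfold util
  split_ifs with hb
  · linarith [le_max_left (v - h) 0]
  · simp

theorem util_mul_self_nonneg {α v : ℝ} (hα : α ≤ 1) (hv : 0 ≤ v) (h : ℝ) :
    0 ≤ util (α * v) h v := by
  unfold util
  split_ifs <;> nlinarith

theorem util_mul_self_le {α v : ℝ} (hα : 0 ≤ α) (hv : 0 ≤ v) (h : ℝ) :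
    util (α * v) h v ≤ v := by
  unfold util
  split_ifs <;> nlinarith

theorem measurable_util : Measurable fun q : ℝ × ℝ × ℝ => util q.1 q.2.1 q.2.2 :=
  (measurable_snd.snd.sub measurable_fst).mul
    (Measurable.ite (measurableSet_le measurable_snd.fst measurable_fst) measurable_const
      measurable_const)

theorem bench_eq_integral_max (F : Measure ℝ) (h : ℝ) :
    bench F h = ∫ v, max (v - h) 0 ∂F := by
  refine integral_congr_ae (.of_forall fun v => ?_)
  by_cases hv : h ≤ v
  · simp [hv]
  · simp [hv, (not_le.1 hv).le]

theorem isStrategy_deterministic {g : ℝ → ℝ} (hg : Measurable g) (hgIu : ∀ v, g v ∈ Iu) :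
    IsStrategy (Kernel.deterministic g hg) :=
  ⟨inferInstance, fun v => (isProbOn_dirac (hgIu v)).2⟩

instance : Nonempty {k : Kernel ℝ ℝ // IsStrategy k} :=
  ⟨⟨_, isStrategy_deterministic measurable_const fun _ => zero_mem_Iu⟩⟩

theorem eUtil_eq_of_ae_eq_dirac {F H : Measure ℝ} {s : Kernel ℝ ℝ} {g : ℝ → ℝ}
    (hs : ∀ᵐ v ∂F, s v = Measure.dirac (g v)) :
    eUtil F s H = ∫ v, ∫ h, util (g v) h v ∂H ∂F := by
  refine integral_congr_ae ?_
  filter_upwards [hs] with v hv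
  simp [hv]

section Regret

variable {F H : Measure ℝ} (hF : IsProbOn F)
include hF

theorem eUtil_le_integral_bench (hH : IsProbOn H) {k : Kernel ℝ ℝ} (hk : IsStrategy k) :
    eUtil F k H ≤ ∫ h, bench F h ∂H := by
  have := hk.1
  have := hF.1
  have := hH.1
  have hint := hF.integrable_max_sub_prod hH
  have hinner : ∀ v h, ∫ b, util b h v ∂(k v) ≤ max (v - h) 0 := fun v h => by
    simpa using integral_le_integral_of_le_of_nonneg (μ := k v) (integrable_const (max (v - h) 0))
      (.of_forall fun _ => le_max_right _ _) (.of_forall fun b => util_le_max b h v)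
  calc eUtil F k H ≤ ∫ v, ∫ h, max (v - h) 0 ∂H ∂F := by
        refine integral_le_integral_of_le_of_nonneg hint.integral_prod_left
          (.of_forall fun v => integral_nonneg fun h => le_max_right _ _) ?_
        filter_upwards [hint.prod_right_ae] with v hv
        exact integral_le_integral_of_le_of_nonneg hv (.of_forall fun h => le_max_right _ _)
          (.of_forall (hinner v))
    _ = ∫ h, bench F h ∂H := by
        simp_rw [bench_eq_integral_max]
        exact integral_integral_swap hint

theorem bddAbove_eUtil (hH : IsProbOn H) :
    BddAbove (range fun k : {k : Kernel ℝ ℝ // IsStrategy k} => eUtil F k.1 H) :=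
  ⟨_, forall_mem_range.2 fun k => eUtil_le_integral_bench hF hH k.2⟩

theorem regret_le_fregret (hH : IsProbOn H) (s : Kernel ℝ ℝ) : regret F s H ≤ fregret F s H :=
  sub_le_sub_right (ciSup_le fun k => eUtil_le_integral_bench hF hH k.2) _

theorem bench_le_iSup_eUtil_dirac {c : ℝ} (hc : c ∈ Iu) :
    bench F c ≤ ⨆ k : {k : Kernel ℝ ℝ // IsStrategy k}, eUtil F k.1 (Measure.dirac c) := by
  have hg : Measurable fun v : ℝ => if c ≤ v then c else 0 :=
    Measurable.ite (measurableSet_le measurable_const measurable_id) measurable_const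
      measurable_const
  have hgIu : ∀ v, (if c ≤ v then c else 0) ∈ Iu := fun v => by
    split_ifs
    exacts [hc, zero_mem_Iu]
  refine le_ciSup_of_le (bddAbove_eUtil hF (isProbOn_dirac hc))
    ⟨_, isStrategy_deterministic hg hgIu⟩ (le_of_eq ?_)
  rw [eUtil_eq_of_ae_eq_dirac (.of_forall fun v => Kernel.deterministic_apply hg v),
    bench_eq_integral_max]
  refine integral_congr_ae ?_
  filter_upwards [hF.ae_mem] with v hv
  rw [integral_dirac]
  unfold util
  by_cases hcv : c ≤ v
  · simp [hcv]
  · have : 0 < c := lt_of_le_of_lt hv.1 (not_le.1 hcv)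
    simp [hcv, this.not_ge, (not_le.1 hcv).le]

end Regret

/-- The full-information regret `R_F(s_α, δ_h)` of bidding `α · v` against the deterministic
highest competing bid `h`. -/
def shadingRegret (F : Measure ℝ) (α h : ℝ) : ℝ := bench F h - ∫ v, util (α * v) h v ∂F

section Shading

variable {F H : Measure ℝ} (hF : IsProbOn F) {α : ℝ}
include hF

theorem IsProbOn.integrable_util_mul_self_prod (hα : α ∈ Iu) (hH : IsProbOn H) :
    Integrable (fun p : ℝ × ℝ => util (α * p.1) p.2 p.1) (F.prod H) := by
  refine hF.integrable_prod_of_bound hH ?_ 1 fun v hv h _ => ?_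
  · exact (measurable_util.comp (f := fun p : ℝ × ℝ => (α * p.1, p.2, p.1))
      (by fun_prop)).aestronglyMeasurable
  · rw [Real.norm_eq_abs, abs_of_nonneg (util_mul_self_nonneg hα.2 hv.1 h)]
    exact (util_mul_self_le hα.1 hv.1 h).trans hv.2

theorem fregret_eq_integral_shadingRegret (hα : α ∈ Iu) (hH : IsProbOn H) {s : Kernel ℝ ℝ}
    (hshade : ∀ v ∈ Iu, s v = Measure.dirac (α * v)) :
    fregret F s H = ∫ h, shadingRegret F α h ∂H := by
  have := hF.1
  have := hH.1
  have hU := hF.integrable_util_mul_self_prod hα hH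
  have hbench : Integrable (fun h => bench F h) H := by
    simpa only [bench_eq_integral_max] using (hF.integrable_max_sub_prod hH).integral_prod_right
  rw [fregret, eUtil_eq_of_ae_eq_dirac (hF.ae_mem.mono hshade),
    integral_integral_swap (f := fun v h => util (α * v) h v) hU,
    ← integral_sub hbench hU.integral_prod_right]
  rfl

theorem shadingRegret_le_regret_dirac {s : Kernel ℝ ℝ}
    (hshade : ∀ v ∈ Iu, s v = Measure.dirac (α * v)) {c : ℝ} (hc : c ∈ Iu) :
    shadingRegret F α c ≤ regret F s (Measure.dirac c) := by
  rw [regret, eUtil_eq_of_ae_eq_dirac (hF.ae_mem.mono hshade)]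
  simpa only [integral_dirac, shadingRegret] using
    sub_le_sub_right (bench_le_iSup_eUtil_dirac hF hc) _

theorem shadingRegret_zero (hα : 0 ≤ α) : shadingRegret F α 0 = α * ∫ v, v ∂F := by
  have hutil : ∫ v, util (α * v) 0 v ∂F = (1 - α) * ∫ v, v ∂F := by
    rw [← integral_const_mul]
    refine integral_congr_ae ?_
    filter_upwards [hF.ae_mem] with v hv
    simp [util, mul_nonneg hα hv.1]
    ring
  have hbench : bench F 0 = ∫ v, v ∂F := by
    rw [bench_eq_integral_max]
    refine integral_congr_ae ?_
    filter_upwards [hF.ae_mem] with v hv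
    simp [hv.1]
  rw [shadingRegret, hutil, hbench]
  ring

theorem shadingRegret_le_integral_max (hα : α ≤ 1) (h : ℝ) :
    shadingRegret F α h ≤ ∫ v, max (v - h) 0 ∂F := by
  rw [shadingRegret, bench_eq_integral_max, sub_le_self_iff]
  exact integral_nonneg_of_ae (hF.ae_mem.mono fun v hv => util_mul_self_nonneg hα hv.1 h)

end Shading

section Density

variable {F : Measure ℝ} {f : ℝ → ℝ}

theorem aemeasurable_of_monotoneOn_mul (hmono : MonotoneOn (fun t => t * f t) Iu) :
    AEMeasurable f (volume.restrict Iu) := by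
  refine ((aemeasurable_restrict_of_monotoneOn measurableSet_Iu hmono).div
    aemeasurable_id).congr ?_
  filter_upwards [ae_restrict_of_ae (Measure.ae_ne volume 0)] with t ht
  exact mul_div_cancel_left₀ (f t) ht

theorem setIntegral_Ici_eq_intervalIntegral (hfmaps : MapsTo f Iu Iu)
    (hdens : F = (volume.restrict Iu).withDensity (fun t => ENNReal.ofReal (f t)))
    (hf : AEMeasurable f (volume.restrict Iu)) {c : ℝ} (hc : c ∈ Iu) :
    ∫ v in Ici c, v ∂F = ∫ t in c..1, t * f t := by
  have hIcc : Ici c ∩ Iu = Icc c 1 := by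
    ext t; simp only [Iu, mem_inter_iff, mem_Ici, mem_Icc]
    constructor
    · rintro ⟨h1, -, h2⟩; exact ⟨h1, h2⟩
    · rintro ⟨h1, h2⟩; exact ⟨h1, hc.1.trans h1, h2⟩
  rw [hdens, setIntegral_withDensity_eq_setIntegral_toReal_smul₀' _
      (hf.ennreal_ofReal.mono_measure Measure.restrict_le_self)
      (.of_forall fun _ => ENNReal.ofReal_lt_top),
    Measure.restrict_restrict measurableSet_Ici, hIcc, integral_Icc_eq_integral_Ioc,
    ← intervalIntegral.integral_of_le hc.2]
  refine intervalIntegral.integral_congr fun t ht => ?_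
  rw [uIcc_of_le hc.2] at ht
  simp [ENNReal.toReal_ofReal (hfmaps ⟨hc.1.trans ht.1, ht.2⟩).1, mul_comm]

theorem convexOn_shadingRegret (hF : IsProbOn F) (hfmaps : MapsTo f Iu Iu)
    (hdens : F = (volume.restrict Iu).withDensity (fun t => ENNReal.ofReal (f t)))
    (hmono : MonotoneOn (fun t => t * f t) Iu) {α : ℝ} (hα0 : 0 < α) (hα1 : α ≤ 1) :
    ConvexOn ℝ (Icc 0 α) (shadingRegret F α) := by
  have hgint : ∀ x ∈ Iu, IntervalIntegrable (fun t => t * f t) volume 0 x := fun x hx =>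
    (hmono.mono (uIcc_subset_Icc zero_mem_Iu hx)).intervalIntegrable
  have hgα : MonotoneOn (fun u => u / α * f (u / α)) (Icc 0 α) := fun x hx y hy hxy =>
    hmono ⟨div_nonneg hx.1 hα0.le, (div_le_one hα0).2 hx.2⟩
      ⟨div_nonneg hy.1 hα0.le, (div_le_one hα0).2 hy.2⟩ (div_le_div_of_nonneg_right hxy hα0.le)
  have hconv := ((hF.convexOn_integral_max_sub.subset (subset_univ _) (convex_Icc 0 α)).add
    (hgα.convexOn_intervalIntegral.smul (div_nonneg (sub_nonneg.2 hα1) hα0.le))).add_const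
    (-(1 - α) * ∫ t in 0..1, t * f t)
  refine hconv.congr fun h hh => ?_
  have hc : h / α ∈ Iu := ⟨div_nonneg hh.1 hα0.le, (div_le_one hα0).2 hh.2⟩
  have hutil : ∫ v, util (α * v) h v ∂F = (1 - α) * ∫ v in Ici (h / α), v ∂F := by
    rw [← integral_indicator measurableSet_Ici, ← integral_const_mul]
    refine integral_congr_ae (.of_forall fun v => ?_)
    by_cases hv : h / α ≤ v
    · simp [util, indicator, hv, (div_le_iff₀' hα0).1 hv]
      ring
    · have : ¬h ≤ α * v := fun h' => hv ((div_le_iff₀' hα0).2 h')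
      simp [util, indicator, hv, this]
  have htail := intervalIntegral.integral_interval_sub_left (hgint 1 one_mem_Iu) (hgint _ hc)
  have hsubst := intervalIntegral.integral_comp_div (a := 0) (b := h) (fun t => t * f t) hα0.ne'
  rw [zero_div, smul_eq_mul] at hsubst
  rw [Pi.add_apply, Pi.add_apply, shadingRegret, bench_eq_integral_max, hutil,
    setIntegral_Ici_eq_intervalIntegral hfmaps hdens (aemeasurable_of_monotoneOn_mul hmono) hc,
    ← htail, hsubst, smul_eq_mul]
  field_simp
  ring

end Density

section Bounds

variable {F : Measure ℝ} (hF : IsProbOn F) {α : ℝ} (hα : α ∈ Iu)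
include hF hα

theorem shadingRegret_le_max {f : ℝ → ℝ} (hfmaps : MapsTo f Iu Iu)
    (hdens : F = (volume.restrict Iu).withDensity (fun t => ENNReal.ofReal (f t)))
    (hmono : MonotoneOn (fun t => t * f t) Iu) {h : ℝ} (hh : 0 ≤ h) :
    shadingRegret F α h ≤ max (α * ∫ v, v ∂F) (∫ v, max (v - α * qinv F 1) 0 ∂F) := by
  have hq : ∫ v, max (v - α) 0 ∂F ≤ ∫ v, max (v - α * qinv F 1) 0 ∂F :=
    hF.antitone_integral_max_sub (mul_le_of_le_one_right hα.1 hF.qinv_one_le_one)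
  rcases le_or_gt α h with hαh | hhα
  · exact le_max_of_le_right <| (shadingRegret_le_integral_max hF hα.2 h).trans <|
      (hF.antitone_integral_max_sub hαh).trans hq
  · have hα0 : 0 < α := hh.trans_lt hhα
    calc shadingRegret F α h ≤ max (shadingRegret F α 0) (shadingRegret F α α) :=
          (convexOn_shadingRegret hF hfmaps hdens hmono hα0 hα.2).le_max_of_mem_Icc
            (left_mem_Icc.2 hα0.le) (right_mem_Icc.2 hα0.le) ⟨hh, hhα.le⟩
      _ ≤ _ := by
          rw [shadingRegret_zero hF hα.1]
          exact max_le_max le_rfl ((shadingRegret_le_integral_max hF hα.2 α).trans hq)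

theorem exists_shadingRegret_ge {ε : ℝ} (hε : 0 < ε) :
    ∃ c ∈ Iu, ∫ v, max (v - α * qinv F 1) 0 ∂F ≤ shadingRegret F α c + 2 * ε := by
  obtain ⟨y, hyIu, hqy, hyε, hae⟩ := hF.exists_ae_le_of_qinv_one_lt (lt_add_of_pos_right _ hε)
  have hT := hF.integral_max_sub_le_add
    (show α * qinv F 1 ≤ α * y + ε by nlinarith [mul_le_mul_of_nonneg_left hqy hα.1])
  by_cases hc1 : α * y + ε ≤ 1
  · refine ⟨α * y + ε, ⟨by nlinarith [hα.1, hyIu.1], hc1⟩, ?_⟩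
    have hutil : ∫ v, util (α * v) (α * y + ε) v ∂F = 0 := by
      refine integral_eq_zero_of_ae ?_
      filter_upwards [hae] with v hv
      have : ¬α * y + ε ≤ α * v := by nlinarith [mul_le_mul_of_nonneg_left hv hα.1]
      simp [util, this]
    rw [shadingRegret, bench_eq_integral_max, hutil, sub_zero]
    nlinarith [mul_le_mul_of_nonneg_left hyε.le hα.1, hα.2]
  · refine ⟨0, zero_mem_Iu, ?_⟩
    have hTc : ∫ v, max (v - (α * y + ε)) 0 ∂F = 0 := by
      refine integral_eq_zero_of_ae ?_
      filter_upwards [hF.ae_mem] with v hv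
      simp only [Pi.zero_apply, max_eq_right_iff]
      linarith [hv.2]
    have hEv : 0 ≤ α * ∫ v, v ∂F :=
      mul_nonneg hα.1 (integral_nonneg_of_ae (hF.ae_mem.mono fun v hv => hv.1))
    rw [shadingRegret_zero hF hα.1]
    nlinarith [mul_le_mul_of_nonneg_left hyε.le hα.1, hα.2]

end Bounds

theorem uniform_bid_shading_worst_case_regret_general
    (F : Measure ℝ) (hF : IsProbOn F)
    (f : ℝ → ℝ) (hfmaps : MapsTo f Iu Iu)
    (hdens : F = (volume.restrict Iu).withDensity (fun t => ENNReal.ofReal (f t)))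
    (hmono : MonotoneOn (fun t => t * f t) Iu)
    (α : ℝ) (hα : α ∈ Iu)
    (s : Kernel ℝ ℝ)
    (hshade : ∀ v ∈ Iu, s v = Measure.dirac (α * v)) :
    (⨆ H : {H : Measure ℝ // IsProbOn H}, regret F s H.1)
      = max (α * ∫ v, v ∂F) (∫ v, max (v - α * qinv F 1) 0 ∂F) := by
  set bound := max (α * ∫ v, v ∂F) (∫ v, max (v - α * qinv F 1) 0 ∂F)
  have hupper : ∀ H : {H : Measure ℝ // IsProbOn H}, regret F s H.1 ≤ bound := fun ⟨H, hH⟩ => by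
    have := hH.1
    refine (regret_le_fregret hF hH s).trans ?_
    rw [fregret_eq_integral_shadingRegret hF hα hH hshade]
    simpa using integral_le_integral_of_le_of_nonneg (integrable_const bound)
      (.of_forall fun _ => (integral_nonneg fun v => le_max_right _ _).trans (le_max_right _ _))
      (hH.ae_mem.mono fun h hh => shadingRegret_le_max hF hα hfmaps hdens hmono hh.1)
  have hlower : ∀ c ∈ Iu,
      shadingRegret F α c ≤ ⨆ H : {H : Measure ℝ // IsProbOn H}, regret F s H.1 :=
    fun c hc => (shadingRegret_le_regret_dirac hF hshade hc).trans
      (le_ciSup ⟨bound, forall_mem_range.2 hupper⟩ ⟨_, isProbOn_dirac hc⟩)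
  have : Nonempty {H : Measure ℝ // IsProbOn H} := ⟨⟨_, isProbOn_dirac zero_mem_Iu⟩⟩
  refine le_antisymm (ciSup_le hupper) (max_le ?_ ?_)
  · rw [← shadingRegret_zero hF hα.1]
    exact hlower 0 zero_mem_Iu
  · refine le_of_forall_pos_le_add fun ε hε => ?_
    obtain ⟨c, hc, hle⟩ := exists_shadingRegret_ge hF hα (half_pos hε)
    linarith [hlower c hc]

/-- Proposition: uniform-bid-shading: let `F` have a density
`f : [0,1] → [0,1]` such that `t ↦ t·f(t)` is non-decreasing, and for `α ∈ [0,1]` let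
`s_α` be the strategy bidding `α·v` deterministically. Then
`sup_H Reg_F(s_α,H) = max{α·E_F[v], E_F[(v − α·F⁻(1))⁺]}`. -/
theorem uniform_bid_shading_worst_case_regret
    (F : Measure ℝ) (hF : IsProbOn F)
    (f : ℝ → ℝ) (hfmaps : MapsTo f Iu Iu)
    (hdens : F = (volume.restrict Iu).withDensity (fun t => ENNReal.ofReal (f t)))
    (hmono : MonotoneOn (fun t => t * f t) Iu)
    (α : ℝ) (hα : α ∈ Iu)
    (s : Kernel ℝ ℝ) (hs : IsStrategy s)
    (hshade : ∀ v ∈ Iu, s v = Measure.dirac (α * v)) :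
    (⨆ H : {H : Measure ℝ // IsProbOn H}, regret F s H.1)
      = max (α * ∫ v, v ∂F) (∫ v, max (v - α * qinv F 1) 0 ∂F) :=
  uniform_bid_shading_worst_case_regret_general F hF f hfmaps hdens hmono α hα s hshade

end FPA
end
end

section
/- For every probability measure F on [0,1] and every bidding strategy s whose induced bid distribution P_{s,F} is absolutely continuous with respect to Lebesgue measure, the map H ↦ Reg_F(s,H) is convex and upper semicontinuous on the space of probability measures on [0,1] equipped with the topology of weak convergence. -/
open MeasureTheory ProbabilityTheory Set

noncomputable section

namespace FPA

/-!
Bidding `b` at value `v` against competing bids drawn from `H` earns `(v - b) H([0,b])`, so the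
best response earns `g_H(v) = sup_b (v - b) H([0,b])` and `Reg_F(s,H) = ∫ g_H dF - ∫ ψ dH`,
where `ψ(h)` is the expected utility of `s` against the fixed competing bid `h`.
The first term is a supremum of functions affine in `H`, hence convex; it is upper
semicontinuous for weak convergence because the mass of a closed set `[0,t]` can only drop in
the limit, and rounding bids up to a finite grid `{j/m}` makes this uniform in the bid.
The second term is linear in `H`, and weakly continuous because `ψ` is bounded and continuous:
`ψ` can jump at `h` only if the bid distribution has an atom at `h`.
-/

open Filter Topology

lemma IsProbOn.ae_mem_Iu {μ : Measure ℝ} (hμ : IsProbOn μ) : ∀ᵐ x ∂μ, x ∈ Iu := by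
  have := hμ.1
  exact (ae_iff_measure_eq measurableSet_Icc.nullMeasurableSet).2 (by rw [measure_univ]; exact hμ.2)

lemma IsStrategy.isProbOn {s : Kernel ℝ ℝ} (hs : IsStrategy s) (v : ℝ) : IsProbOn (s v) :=
  ⟨hs.1.isProbabilityMeasure v, hs.2 v⟩

lemma abs_sub_le_one_of_mem_Iu {x y : ℝ} (hx : x ∈ Iu) (hy : y ∈ Iu) : |x - y| ≤ 1 :=
  abs_sub_le_of_nonneg_of_le hx.1 hx.2 hy.1 hy.2

lemma norm_util_le_one {b h v : ℝ} (hb : b ∈ Iu) (hv : v ∈ Iu) : ‖util b h v‖ ≤ 1 := by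
  rw [Real.norm_eq_abs, util, abs_mul]
  refine mul_le_one₀ (abs_sub_le_one_of_mem_Iu hv hb) (abs_nonneg _) ?_
  split_ifs <;> simp

@[fun_prop]
lemma Measurable.util {α : Type*} [MeasurableSpace α] {b h v : α → ℝ} (hb : Measurable b)
    (hh : Measurable h) (hv : Measurable v) : Measurable fun x => util (b x) (h x) (v x) :=
  (hv.sub hb).mul (Measurable.ite (measurableSet_le hh hb) measurable_const measurable_const)

def bidPayoff (H : Measure ℝ) (v b : ℝ) : ℝ := (v - b) * cdf01 H b

section cdf

variable (H : Measure ℝ)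

lemma cdf01_nonneg (x : ℝ) : 0 ≤ cdf01 H x := measureReal_nonneg

lemma cdf01_le_one [IsProbabilityMeasure H] (x : ℝ) : cdf01 H x ≤ 1 := measureReal_le_one

lemma bidPayoff_nonpos {v b : ℝ} (hvb : v ≤ b) : bidPayoff H v b ≤ 0 :=
  mul_nonpos_of_nonpos_of_nonneg (sub_nonpos.2 hvb) (cdf01_nonneg H b)

lemma monotone_cdf01 [IsFiniteMeasure H] : Monotone (cdf01 H) :=
  fun _ _ hxy => measureReal_mono (Iic_subset_Iic.2 hxy)

@[fun_prop]
lemma Measurable.bidPayoff [IsFiniteMeasure H] {α : Type*} [MeasurableSpace α] {v b : α → ℝ}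
    (hv : Measurable v) (hb : Measurable b) : Measurable fun x => bidPayoff H (v x) (b x) :=
  (hv.sub hb).mul ((monotone_cdf01 H).measurable.comp hb)

lemma integral_util [IsFiniteMeasure H] (b v : ℝ) :
    ∫ h, util b h v ∂H = bidPayoff H v b := by
  have hind : (fun h => util b h v) = fun h => (v - b) * (Iic b).indicator 1 h := by
    ext h
    by_cases hhb : h ≤ b <;> simp [util, hhb]
  rw [hind, integral_const_mul, integral_indicator_one measurableSet_Iic]
  rfl

end cdf

def gridBid (n : ℕ) : ℝ := min 1 ((n.unpair.1 : ℝ) / n.unpair.2)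

lemma gridBid_mem (n : ℕ) : gridBid n ∈ Iu := ⟨le_min zero_le_one (by positivity), min_le_left _ _⟩

lemma gridBid_pair {j m : ℕ} (hjm : j ≤ m) : gridBid (Nat.pair j m) = j / m := by
  rw [gridBid, Nat.unpair_pair]
  exact min_eq_right (div_le_one_of_le₀ (by exact_mod_cast hjm) (Nat.cast_nonneg m))

lemma gridBid_zero : gridBid 0 = 0 := by simp [gridBid]

lemma exists_grid_mem_Icc {b : ℝ} (hb : b ∈ Iu) {m : ℕ} (hm : 0 < m) :
    ∃ j ≤ m, (j / m : ℝ) ∈ Icc b (b + 1 / m) := by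
  have hm' : (0 : ℝ) < m := Nat.cast_pos.2 hm
  refine ⟨⌈b * m⌉₊, Nat.ceil_le.2 (by nlinarith [hb.2]), ?_, ?_⟩
  · rw [le_div_iff₀ hm']
    exact Nat.le_ceil _
  · rw [div_le_iff₀ hm', add_mul, one_div_mul_cancel hm'.ne']
    exact (Nat.ceil_lt_add_one (mul_nonneg hb.1 hm'.le)).le

/-- The best-response value `sup_{b ∈ [0,1]} (v - b) H([0,b])`: the grid suffices by
`bidPayoff_le_bestPayoff`. -/
def bestPayoff (H : Measure ℝ) (v : ℝ) : ℝ := ⨆ n, bidPayoff H v (gridBid n)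

lemma measurable_bestPayoff (H : Measure ℝ) : Measurable (bestPayoff H) :=
  Measurable.iSup fun _ => (measurable_id.sub_const _).mul_const _

section bestPayoff

variable (H : Measure ℝ) [IsProbabilityMeasure H] {v : ℝ}

lemma abs_bidPayoff_le (v b : ℝ) : |bidPayoff H v b| ≤ |v - b| := by
  rw [bidPayoff, abs_mul]
  exact mul_le_of_le_one_right (abs_nonneg _)
    (abs_le.2 ⟨by linarith [cdf01_nonneg H b], cdf01_le_one H b⟩)

lemma bddAbove_range_bidPayoff_gridBid (v : ℝ) :
    BddAbove (range fun n => bidPayoff H v (gridBid n)) := by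
  refine ⟨|v| + 1, ?_⟩
  rintro _ ⟨n, rfl⟩
  have hn : |gridBid n| ≤ 1 := abs_le.2 ⟨by linarith [(gridBid_mem n).1], (gridBid_mem n).2⟩
  linarith [le_abs_self (bidPayoff H v (gridBid n)), abs_bidPayoff_le H v (gridBid n),
    abs_sub v (gridBid n)]

lemma bidPayoff_gridBid_le_bestPayoff (v : ℝ) (n : ℕ) :
    bidPayoff H v (gridBid n) ≤ bestPayoff H v :=
  le_ciSup (bddAbove_range_bidPayoff_gridBid H v) n

lemma bestPayoff_nonneg (hv : 0 ≤ v) : 0 ≤ bestPayoff H v := by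
  have h0 := bidPayoff_gridBid_le_bestPayoff H v 0
  rw [gridBid_zero, bidPayoff, sub_zero] at h0
  exact (mul_nonneg hv (cdf01_nonneg H 0)).trans h0

lemma bestPayoff_le_one (hv : v ∈ Iu) : bestPayoff H v ≤ 1 :=
  ciSup_le fun n => (le_abs_self _).trans <| (abs_bidPayoff_le H v _).trans <|
    abs_sub_le_one_of_mem_Iu hv (gridBid_mem n)

lemma abs_bestPayoff_le_one (hv : v ∈ Iu) : |bestPayoff H v| ≤ 1 :=
  abs_le.2 ⟨by linarith [bestPayoff_nonneg H hv.1], bestPayoff_le_one H hv⟩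

lemma integrable_bestPayoff {F : Measure ℝ} (hF : IsProbOn F) : Integrable (bestPayoff H) F := by
  have := hF.1
  refine .of_bound (measurable_bestPayoff H).aestronglyMeasurable 1 ?_
  filter_upwards [hF.ae_mem_Iu] with v hv
  exact abs_bestPayoff_le_one H hv

lemma bidPayoff_le_bidPayoff_add {H₀ : Measure ℝ} [IsProbabilityMeasure H₀] {b t ε : ℝ}
    (hbv : b ≤ v) (hbt : b ≤ t) (hcdf : cdf01 H t ≤ cdf01 H₀ t + ε) :
    bidPayoff H v b ≤ bidPayoff H₀ v t + (t - b) + (v - b) * ε := by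
  have hvb : 0 ≤ v - b := sub_nonneg.2 hbv
  calc bidPayoff H v b ≤ (v - b) * (cdf01 H₀ t + ε) :=
        mul_le_mul_of_nonneg_left ((monotone_cdf01 H hbt).trans hcdf) hvb
    _ = bidPayoff H₀ v t + (t - b) * cdf01 H₀ t + (v - b) * ε := by rw [bidPayoff]; ring
    _ ≤ bidPayoff H₀ v t + (t - b) + (v - b) * ε := by
        gcongr
        exact mul_le_of_le_one_right (sub_nonneg.2 hbt) (cdf01_le_one H₀ t)

lemma bidPayoff_le_bestPayoff {b : ℝ} (hv : 0 ≤ v) (hb : b ∈ Iu) :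
    bidPayoff H v b ≤ bestPayoff H v := by
  rcases le_total v b with hvb | hbv
  · exact (bidPayoff_nonpos H hvb).trans (bestPayoff_nonneg H hv)
  refine le_of_forall_pos_lt_add fun δ hδ => ?_
  obtain ⟨m, hm⟩ := exists_nat_one_div_lt hδ
  obtain ⟨j, hjm, hbt, htb⟩ := exists_grid_mem_Icc hb m.succ_pos
  calc bidPayoff H v b ≤ bidPayoff H v (j / (m + 1 : ℕ)) + (j / (m + 1 : ℕ) - b) + (v - b) * 0 :=
        bidPayoff_le_bidPayoff_add H hbv hbt (add_zero _).ge
    _ ≤ bestPayoff H v + 1 / (m + 1 : ℕ) := by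
        rw [← gridBid_pair hjm, mul_zero, add_zero]
        gcongr
        · exact bidPayoff_gridBid_le_bestPayoff H v _
        · rw [gridBid_pair hjm]; linarith
    _ < bestPayoff H v + δ := by push_cast; linarith

end bestPayoff

section strategy

variable {F : Measure ℝ} {s : Kernel ℝ ℝ}

lemma ae_mem_Iu_compProd (hF : IsProbOn F) (hs : IsStrategy s) :
    ∀ᵐ z ∂(F ⊗ₘ s), z.1 ∈ Iu ∧ z.2 ∈ Iu :=
  Measure.ae_compProd_of_ae_ae
    ((measurableSet_Icc.preimage measurable_fst).inter (measurableSet_Icc.preimage measurable_snd))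
    (hF.ae_mem_Iu.mono fun _ hv => (hs.isProbOn _).ae_mem_Iu.mono fun _ hb => ⟨hv, hb⟩)

lemma integrable_compProd_of_abs_le_one (hF : IsProbOn F) (hs : IsStrategy s)
    {f : ℝ × ℝ → ℝ} (hf : Measurable f) (hbound : ∀ v ∈ Iu, ∀ b ∈ Iu, |f (v, b)| ≤ 1) :
    Integrable f (F ⊗ₘ s) := by
  have := hF.1
  have := hs.1
  exact .of_bound hf.aestronglyMeasurable 1
    ((ae_mem_Iu_compProd hF hs).mono fun z hz => hbound _ hz.1 _ hz.2)

variable (H : Measure ℝ) [IsProbabilityMeasure H]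

lemma integrable_bidPayoff_compProd (hF : IsProbOn F) (hs : IsStrategy s) :
    Integrable (fun z => bidPayoff H z.1 z.2) (F ⊗ₘ s) :=
  integrable_compProd_of_abs_le_one hF hs (by fun_prop) fun v hv b hb =>
    (abs_bidPayoff_le H v b).trans (abs_sub_le_one_of_mem_Iu hv hb)

lemma eUtil_eq_integral_compProd (hF : IsProbOn F) (hs : IsStrategy s) :
    eUtil F s H = ∫ z, bidPayoff H z.1 z.2 ∂(F ⊗ₘ s) := by
  have := hF.1
  have := hs.1
  rw [Measure.integral_compProd (integrable_bidPayoff_compProd H hF hs), eUtil]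
  refine integral_congr_ae (hF.ae_mem_Iu.mono fun v hv => ?_)
  have hsv := hs.isProbOn v
  have := hsv.1
  simp_rw [← integral_util]
  refine integral_integral_swap (.of_bound (Measurable.aestronglyMeasurable (by fun_prop)) 1 ?_)
  filter_upwards [Measure.quasiMeasurePreserving_snd.ae hsv.ae_mem_Iu] with z hz
  exact norm_util_le_one hz hv

lemma eUtil_le_integral_bestPayoff (hF : IsProbOn F) (hs : IsStrategy s) :
    eUtil F s H ≤ ∫ v, bestPayoff H v ∂F := by
  have := hF.1
  have := hs.1
  have hbest : Integrable (fun z : ℝ × ℝ => bestPayoff H z.1) (F ⊗ₘ s) :=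
    integrable_compProd_of_abs_le_one hF hs ((measurable_bestPayoff H).comp measurable_fst)
      fun v hv _ _ => abs_bestPayoff_le_one H hv
  calc eUtil F s H = ∫ z, bidPayoff H z.1 z.2 ∂(F ⊗ₘ s) := eUtil_eq_integral_compProd H hF hs
    _ ≤ ∫ z, bestPayoff H z.1 ∂(F ⊗ₘ s) :=
        integral_mono_ae (integrable_bidPayoff_compProd H hF hs) hbest
          ((ae_mem_Iu_compProd hF hs).mono fun z hz => bidPayoff_le_bestPayoff H hz.1.1 hz.2)
    _ = ∫ v, bestPayoff H v ∂F := by simp [Measure.integral_compProd hbest]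

end strategy

lemma isStrategy_deterministic_s17 {f : ℝ → ℝ} (hf : Measurable f) (hfI : ∀ v, f v ∈ Iu) :
    IsStrategy (Kernel.deterministic f hf) :=
  ⟨Kernel.isMarkovKernel_deterministic hf, fun v => by
    rw [Kernel.deterministic_apply, Measure.dirac_apply_of_mem (hfI v)]⟩

lemma eUtil_deterministic (F : Measure ℝ) {f : ℝ → ℝ} (hf : Measurable f) (H : Measure ℝ)
    [IsFiniteMeasure H] :
    eUtil F (Kernel.deterministic f hf) H = ∫ v, bidPayoff H v (f v) ∂F := by
  simp only [eUtil, Kernel.deterministic_apply, integral_dirac, integral_util]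

section bestResponse

variable {F : Measure ℝ} (H : Measure ℝ) [IsProbabilityMeasure H]

lemma exists_isStrategy_le_eUtil (hF : IsProbOn F) {ε : ℝ} (hε : 0 < ε) :
    ∃ s, IsStrategy s ∧ ∫ v, bestPayoff H v ∂F - ε ≤ eUtil F s H := by
  classical
  have := hF.1
  have hex (v : ℝ) : ∃ n, bestPayoff H v - ε < bidPayoff H v (gridBid n) :=
    exists_lt_of_lt_ciSup (sub_lt_self _ hε)
  set f := fun v => gridBid (Nat.find (hex v))
  have hf : Measurable f :=
    (measurable_from_nat (f := gridBid)).comp <| measurable_find hex fun _ => measurableSet_lt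
      ((measurable_bestPayoff H).sub_const ε) ((measurable_id.sub_const _).mul_const _)
  have hint : Integrable (fun v => bidPayoff H v (f v)) F :=
    .of_bound (Measurable.aestronglyMeasurable (by fun_prop)) 1 (hF.ae_mem_Iu.mono fun v hv =>
      (abs_bidPayoff_le H v _).trans (abs_sub_le_one_of_mem_Iu hv (gridBid_mem _)))
  refine ⟨_, isStrategy_deterministic_s17 hf fun v => gridBid_mem _, ?_⟩
  calc ∫ v, bestPayoff H v ∂F - ε = ∫ v, (bestPayoff H v - ε) ∂F := by
        simp [integral_sub (integrable_bestPayoff H hF) (integrable_const ε)]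
    _ ≤ ∫ v, bidPayoff H v (f v) ∂F :=
        integral_mono ((integrable_bestPayoff H hF).sub (integrable_const ε)) hint
          fun v => (Nat.find_spec (hex v)).le
    _ = eUtil F (Kernel.deterministic f hf) H := (eUtil_deterministic F hf H).symm

lemma iSup_eUtil_eq_integral_bestPayoff (hF : IsProbOn F) :
    ⨆ s : {k : Kernel ℝ ℝ // IsStrategy k}, eUtil F s.1 H = ∫ v, bestPayoff H v ∂F := by
  have hle (s : {k : Kernel ℝ ℝ // IsStrategy k}) : eUtil F s.1 H ≤ ∫ v, bestPayoff H v ∂F :=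
    eUtil_le_integral_bestPayoff H hF s.2
  obtain ⟨s₀, hs₀, -⟩ := exists_isStrategy_le_eUtil H hF one_pos
  have : Nonempty {k : Kernel ℝ ℝ // IsStrategy k} := ⟨⟨s₀, hs₀⟩⟩
  refine le_antisymm (ciSup_le hle) (le_of_forall_pos_le_add fun ε hε => ?_)
  obtain ⟨s, hs, hle_s⟩ := exists_isStrategy_le_eUtil H hF hε
  linarith [le_ciSup ⟨_, forall_mem_range.2 hle⟩ (⟨s, hs⟩ : {k : Kernel ℝ ℝ // IsStrategy k})]

end bestResponse

def utilAt (F : Measure ℝ) (s : Kernel ℝ ℝ) (h : ℝ) : ℝ := ∫ z, util z.2 h z.1 ∂(F ⊗ₘ s)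

lemma continuousAt_util_of_ne {b h₀ : ℝ} (v : ℝ) (hb : b ≠ h₀) :
    ContinuousAt (fun h => util b h v) h₀ := by
  refine (show ContinuousAt (fun _ => util b h₀ v) h₀ from continuousAt_const).congr ?_
  rcases hb.lt_or_gt with hlt | hgt
  · filter_upwards [eventually_gt_nhds hlt] with h hh
    simp [util, not_le.2 hh, not_le.2 hlt]
  · filter_upwards [eventually_lt_nhds hgt] with h hh
    simp [util, hh.le, hgt.le]

section utilAt

variable {F : Measure ℝ} {s : Kernel ℝ ℝ}

lemma measurable_utilAt : Measurable (utilAt F s) :=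
  (StronglyMeasurable.integral_prod_right' (f := fun p : ℝ × ℝ × ℝ => util p.2.2 p.1 p.2.1)
    (by fun_prop)).measurable

lemma norm_utilAt_le_one (hF : IsProbOn F) (hs : IsStrategy s) (h : ℝ) : ‖utilAt F s h‖ ≤ 1 := by
  have := hF.1
  have := hs.1
  simpa [utilAt] using norm_integral_le_of_norm_le_const
    ((ae_mem_Iu_compProd hF hs).mono fun z hz => norm_util_le_one (h := h) hz.2 hz.1)

lemma integrable_utilAt (hF : IsProbOn F) (hs : IsStrategy s) (H : Measure ℝ) [IsFiniteMeasure H] :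
    Integrable (utilAt F s) H :=
  .of_bound measurable_utilAt.aestronglyMeasurable 1 (.of_forall (norm_utilAt_le_one hF hs))

lemma eUtil_eq_integral_utilAt (hF : IsProbOn F) (hs : IsStrategy s) (H : Measure ℝ)
    [IsProbabilityMeasure H] : eUtil F s H = ∫ h, utilAt F s h ∂H := by
  have := hF.1
  have := hs.1
  rw [eUtil_eq_integral_compProd H hF hs]
  simp only [← integral_util H, utilAt]
  refine integral_integral_swap (.of_bound (Measurable.aestronglyMeasurable (by fun_prop)) 1 ?_)
  filter_upwards [Measure.quasiMeasurePreserving_fst.ae (ae_mem_Iu_compProd hF hs)] with p hp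
  exact norm_util_le_one hp.2 hp.1

lemma ae_snd_ne_of_absolutelyContinuous (hF : IsProbOn F) (hs : IsStrategy s)
    (hac : bidDist F s ≪ volume) (h₀ : ℝ) : ∀ᵐ z ∂(F ⊗ₘ s), z.2 ≠ h₀ := by
  have := hF.1
  have := hs.1
  have hsnd : (F ⊗ₘ s).snd ≪ volume := by rwa [Measure.snd_compProd]
  exact ae_of_ae_map measurable_snd.aemeasurable (hsnd.ae_le (Measure.ae_ne volume h₀))

lemma continuous_utilAt (hF : IsProbOn F) (hs : IsStrategy s) (hac : bidDist F s ≪ volume) :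
    Continuous (utilAt F s) := by
  have := hF.1
  have := hs.1
  refine continuous_iff_continuousAt.2 fun h₀ => continuousAt_of_dominated (bound := fun _ => 1)
    (.of_forall fun _ => Measurable.aestronglyMeasurable (by fun_prop))
    (.of_forall fun _ => (ae_mem_Iu_compProd hF hs).mono fun z hz => norm_util_le_one hz.2 hz.1)
    (integrable_const 1)
    ((ae_snd_ne_of_absolutelyContinuous hF hs hac h₀).mono fun z => continuousAt_util_of_ne z.1)

lemma continuous_integral_utilAt (hF : IsProbOn F) (hs : IsStrategy s)
    (hac : bidDist F s ≪ volume) :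
    Continuous fun H : ProbabilityMeasure ℝ => ∫ h, utilAt F s h ∂H :=
  ProbabilityMeasure.continuous_integral_boundedContinuousFunction
    (.ofNormedAddCommGroup _ (continuous_utilAt hF hs hac) 1 (norm_utilAt_le_one hF hs))

lemma regret_eq (hF : IsProbOn F) (hs : IsStrategy s) (H : Measure ℝ) [IsProbabilityMeasure H] :
    regret F s H = ∫ v, bestPayoff H v ∂F - ∫ h, utilAt F s h ∂H := by
  rw [regret, iSup_eUtil_eq_integral_bestPayoff H hF, eUtil_eq_integral_utilAt hF hs H]

end utilAt

section mixture

variable (H₁ H₂ : Measure ℝ) {θ : ℝ}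

lemma isProbabilityMeasure_mix [IsProbabilityMeasure H₁] [IsProbabilityMeasure H₂]
    (h0 : 0 ≤ θ) (h1 : θ ≤ 1) :
    IsProbabilityMeasure (ENNReal.ofReal θ • H₁ + ENNReal.ofReal (1 - θ) • H₂) :=
  ⟨by simp [← ENNReal.ofReal_add h0 (sub_nonneg.2 h1)]⟩

lemma integral_mix {g : ℝ → ℝ} (hg₁ : Integrable g H₁) (hg₂ : Integrable g H₂)
    (h0 : 0 ≤ θ) (h1 : θ ≤ 1) :
    ∫ x, g x ∂(ENNReal.ofReal θ • H₁ + ENNReal.ofReal (1 - θ) • H₂)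
      = θ * ∫ x, g x ∂H₁ + (1 - θ) * ∫ x, g x ∂H₂ := by
  rw [integral_add_measure (hg₁.smul_measure ENNReal.ofReal_ne_top)
      (hg₂.smul_measure ENNReal.ofReal_ne_top), integral_smul_measure, integral_smul_measure,
    ENNReal.toReal_ofReal h0, ENNReal.toReal_ofReal (sub_nonneg.2 h1), smul_eq_mul, smul_eq_mul]

lemma cdf01_mix [IsFiniteMeasure H₁] [IsFiniteMeasure H₂] (h0 : 0 ≤ θ) (h1 : θ ≤ 1) (x : ℝ) :
    cdf01 (ENNReal.ofReal θ • H₁ + ENNReal.ofReal (1 - θ) • H₂) x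
      = θ * cdf01 H₁ x + (1 - θ) * cdf01 H₂ x := by
  rw [cdf01, Measure.add_apply, Measure.smul_apply, Measure.smul_apply, smul_eq_mul, smul_eq_mul,
    ENNReal.toReal_add (by finiteness) (by finiteness), ENNReal.toReal_mul, ENNReal.toReal_mul,
    ENNReal.toReal_ofReal h0, ENNReal.toReal_ofReal (sub_nonneg.2 h1)]
  rfl

variable [IsProbabilityMeasure H₁] [IsProbabilityMeasure H₂]

lemma bestPayoff_mix_le (h0 : 0 ≤ θ) (h1 : θ ≤ 1) (v : ℝ) :
    bestPayoff (ENNReal.ofReal θ • H₁ + ENNReal.ofReal (1 - θ) • H₂) v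
      ≤ θ * bestPayoff H₁ v + (1 - θ) * bestPayoff H₂ v := by
  refine ciSup_le fun n => ?_
  have hmix : bidPayoff (ENNReal.ofReal θ • H₁ + ENNReal.ofReal (1 - θ) • H₂) v (gridBid n)
      = θ * bidPayoff H₁ v (gridBid n) + (1 - θ) * bidPayoff H₂ v (gridBid n) := by
    rw [bidPayoff, cdf01_mix H₁ H₂ h0 h1, bidPayoff, bidPayoff]
    ring
  rw [hmix]
  exact add_le_add (mul_le_mul_of_nonneg_left (bidPayoff_gridBid_le_bestPayoff H₁ v n) h0)
    (mul_le_mul_of_nonneg_left (bidPayoff_gridBid_le_bestPayoff H₂ v n) (sub_nonneg.2 h1))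

lemma regret_mix_le {F : Measure ℝ} {s : Kernel ℝ ℝ} (hF : IsProbOn F) (hs : IsStrategy s)
    (h0 : 0 ≤ θ) (h1 : θ ≤ 1) :
    regret F s (ENNReal.ofReal θ • H₁ + ENNReal.ofReal (1 - θ) • H₂)
      ≤ θ * regret F s H₁ + (1 - θ) * regret F s H₂ := by
  have := isProbabilityMeasure_mix H₁ H₂ h0 h1
  have hbest : ∫ v, bestPayoff (ENNReal.ofReal θ • H₁ + ENNReal.ofReal (1 - θ) • H₂) v ∂F
      ≤ θ * ∫ v, bestPayoff H₁ v ∂F + (1 - θ) * ∫ v, bestPayoff H₂ v ∂F := by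
    rw [← integral_const_mul, ← integral_const_mul, ← integral_add
      ((integrable_bestPayoff H₁ hF).const_mul θ) ((integrable_bestPayoff H₂ hF).const_mul _)]
    exact integral_mono (integrable_bestPayoff _ hF)
      (((integrable_bestPayoff H₁ hF).const_mul θ).add ((integrable_bestPayoff H₂ hF).const_mul _))
      (bestPayoff_mix_le H₁ H₂ h0 h1)
  rw [regret_eq hF hs, regret_eq hF hs, regret_eq hF hs,
    integral_mix H₁ H₂ (integrable_utilAt hF hs H₁) (integrable_utilAt hF hs H₂) h0 h1]
  linarith

end mixture

lemma upperSemicontinuous_cdf01 (t : ℝ) :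
    UpperSemicontinuous fun H : ProbabilityMeasure ℝ => cdf01 H t := by
  intro H₀ y hy
  have hlt : (H₀ : Measure ℝ) (Iic t) < ENNReal.ofReal y :=
    (ENNReal.lt_ofReal_iff_toReal_lt (measure_ne_top _ _)).2 hy
  filter_upwards [eventually_lt_of_limsup_lt
    ((ProbabilityMeasure.limsup_measure_closed_le_of_tendsto tendsto_id isClosed_Iic).trans_lt hlt)]
    with H hH
  exact ENNReal.toReal_lt_of_lt_ofReal hH

lemma bestPayoff_le_of_forall_cdf01_le (H₀ H : Measure ℝ) [IsProbabilityMeasure H₀]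
    [IsProbabilityMeasure H] {m : ℕ} (hm : 0 < m) {ε : ℝ} (hε : 0 ≤ ε)
    (hcdf : ∀ j ≤ m, cdf01 H (j / m) ≤ cdf01 H₀ (j / m) + ε) {v : ℝ} (hv : v ∈ Iu) :
    bestPayoff H v ≤ bestPayoff H₀ v + (1 / m + ε) := by
  refine ciSup_le fun n => ?_
  have hb := gridBid_mem n
  rcases le_total v (gridBid n) with hvb | hbv
  · linarith [bidPayoff_nonpos H hvb, bestPayoff_nonneg H₀ hv.1,
      one_div_nonneg.2 (m.cast_nonneg : (0 : ℝ) ≤ m)]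
  obtain ⟨j, hjm, hbt, htb⟩ := exists_grid_mem_Icc hb hm
  have hround := bidPayoff_le_bidPayoff_add H hbv hbt (hcdf j hjm)
  have hbest := bidPayoff_le_bestPayoff H₀ hv.1 (gridBid_pair hjm ▸ gridBid_mem (Nat.pair j m))
  have hslack : (v - gridBid n) * ε ≤ ε := mul_le_of_le_one_left hε (by linarith [hv.2, hb.1])
  linarith

lemma upperSemicontinuous_integral_bestPayoff {F : Measure ℝ} (hF : IsProbOn F) :
    UpperSemicontinuous fun H : ProbabilityMeasure ℝ => ∫ v, bestPayoff H v ∂F := by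
  intro H₀ c hc
  set ε := (c - ∫ v, bestPayoff H₀ v ∂F) / 2 with hε_def
  have hε : 0 < ε := half_pos (sub_pos.2 hc)
  obtain ⟨m, hm⟩ := exists_nat_one_div_lt hε
  have hgrid : ∀ᶠ H : ProbabilityMeasure ℝ in 𝓝 H₀, ∀ j ∈ Iic (m + 1),
      cdf01 H (j / (m + 1 : ℕ)) < cdf01 H₀ (j / (m + 1 : ℕ)) + ε :=
    (eventually_all_finite (finite_Iic _)).2 fun j _ =>
      upperSemicontinuous_cdf01 _ H₀ _ (lt_add_of_pos_right _ hε)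
  filter_upwards [hgrid] with H hH
  have := hF.1
  calc ∫ v, bestPayoff H v ∂F ≤ ∫ v, (bestPayoff H₀ v + (1 / (m + 1 : ℕ) + ε)) ∂F :=
        integral_mono_ae (integrable_bestPayoff _ hF)
          ((integrable_bestPayoff _ hF).add (integrable_const _))
          (hF.ae_mem_Iu.mono fun v hv => bestPayoff_le_of_forall_cdf01_le H₀ H m.succ_pos
            hε.le (fun j hj => (hH j hj).le) hv)
    _ = ∫ v, bestPayoff H₀ v ∂F + (1 / (m + 1 : ℕ) + ε) := by
        simp [integral_add (integrable_bestPayoff _ hF) (integrable_const _)]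
    _ < c := by push_cast; linarith

/-- regret is convex and upper semicontinuous in `H`: for a value
distribution `F` on `[0,1]` and a strategy `s` with absolutely continuous induced bid
distribution, the map `H ↦ Reg_F(s,H)` is convex on probability measures supported on
`[0,1]`, and upper semicontinuous on the set of probability measures on `[0,1]` inside the
space of probability measures equipped with the topology of weak convergence. -/
theorem regret_convex_upper_semicontinuous
    (F : Measure ℝ) (hF : IsProbOn F) (s : Kernel ℝ ℝ) (hs : IsStrategy s)
    (hac : bidDist F s ≪ volume) :
    (∀ H₁ H₂ : Measure ℝ, IsProbOn H₁ → IsProbOn H₂ → ∀ θ : ℝ, 0 ≤ θ → θ ≤ 1 →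
      regret F s (ENNReal.ofReal θ • H₁ + ENNReal.ofReal (1 - θ) • H₂)
        ≤ θ * regret F s H₁ + (1 - θ) * regret F s H₂)
    ∧ UpperSemicontinuousOn (fun H : ProbabilityMeasure ℝ => regret F s H.toMeasure)
        {H : ProbabilityMeasure ℝ | H.toMeasure Iu = 1} := by
  refine ⟨fun H₁ H₂ h₁ h₂ θ h0 h1 => ?_, ?_⟩
  · have := h₁.1
    have := h₂.1
    exact regret_mix_le H₁ H₂ hF hs h0 h1
  · have hsplit : (fun H : ProbabilityMeasure ℝ => regret F s H.toMeasure)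
        = fun H : ProbabilityMeasure ℝ => ∫ v, bestPayoff H v ∂F + -∫ h, utilAt F s h ∂H :=
      funext fun H => by rw [regret_eq hF hs, sub_eq_add_neg]
    rw [hsplit]
    exact ((upperSemicontinuous_integral_bestPayoff hF).add
      (continuous_integral_utilAt hF hs hac).neg.upperSemicontinuous).upperSemicontinuousOn _

end FPA
end
end
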